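/- Let p be a non-zero polynomial on ℂⁿ, q a polynomial dividing p in ℂ[z₁,...,zₙ] (p = p₁q with p₁ non-constant vanishing at some point v), and A > 0. Then the evaluation-type functional T_v(fq) = f(v) satisfies the continuity estimate |T_v(fq)| ≤ c_A e^{√n A|v|} ‖fq‖_A for all entire f of exponential type with ‖fq‖_A < ∞, where c_A depends only on q and A. -/

import Mathlib

/-- The Euclidean norm on ℂⁿ. -/
noncomputable def enorm' {n : ℕ} (z : Fin n → ℂ) : ℝ :=
  Real.sqrt (∑ i, ‖z i‖ ^ 2)

/-! Restrict to the complex line `w ↦ v + w • (z₀ - v)` through a point `z₀` with `q z₀ ≠ 0`.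
Along it `q` is a nonzero polynomial in `w`, hence bounded below by some `ε > 0` on a circle
`‖w‖ = R` enclosing all its roots, and the maximum modulus principle on that disc bounds
`‖f v‖` by `ε⁻¹ M exp (A (‖v‖ + R ‖z₀ - v‖))`. -/

open Polynomial Metric Real

lemma enorm'_eq_norm_toLp {n : ℕ} (z : Fin n → ℂ) : enorm' z = ‖WithLp.toLp 2 z‖ := by
  rw [EuclideanSpace.norm_eq]
  rfl

lemma enorm'_add_smul_le {n : ℕ} (v u : Fin n → ℂ) (w : ℂ) :
    enorm' (v + w • u) ≤ enorm' v + ‖w‖ * enorm' u := by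
  simpa only [enorm'_eq_norm_toLp, WithLp.toLp_add, WithLp.toLp_smul, norm_smul]
    using norm_add_le (WithLp.toLp 2 v) (w • WithLp.toLp 2 u)

lemma enorm'_le_sqrt_mul {n : ℕ} (z : Fin n → ℂ) : enorm' z ≤ √n * enorm' z := by
  rcases Nat.eq_zero_or_pos n with rfl | hn
  · simp [enorm']
  · exact le_mul_of_one_le_left (Real.sqrt_nonneg _) (Real.one_le_sqrt.mpr (by exact_mod_cast hn))

lemma MvPolynomial.exists_eval_ne_zero {σ K : Type*} [Field K] [Infinite K]
    {q : MvPolynomial σ K} (hq : q ≠ 0) : ∃ z, eval z q ≠ 0 := by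
  by_contra! h
  exact hq (MvPolynomial.funext fun z => by simp [h z])

lemma MvPolynomial.exists_polynomial_eval_eq_eval_add_smul {σ R : Type*} [CommRing R]
    (q : MvPolynomial σ R) (v u : σ → R) :
    ∃ P : R[X], ∀ w, P.eval w = eval (v + w • u) q := by
  refine ⟨aeval (fun i => Polynomial.C (v i) + Polynomial.X * Polynomial.C (u i)) q, fun w => ?_⟩
  have hline : (fun i => Polynomial.aeval w (Polynomial.C (v i) + Polynomial.X * Polynomial.C (u i)))
      = v + w • u := by
    ext i
    simp only [map_add, map_mul, Polynomial.aeval_C, Polynomial.aeval_X,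
      Algebra.algebraMap_self_apply, Pi.add_apply, Pi.smul_apply, smul_eq_mul]
  rw [← Polynomial.coe_aeval_eq_eval, comp_aeval_apply, hline]
  rfl

lemma Polynomial.exists_sphere_forall_le_norm_eval {P : ℂ[X]} (hP : P ≠ 0) :
    ∃ R > 0, ∃ ε > 0, ∀ w ∈ sphere (0 : ℂ) R, ε ≤ ‖P.eval w‖ := by
  obtain ⟨B, hB⟩ := ((finite_setOfPred_isRoot hP).image (‖·‖)).bddAbove
  have hR : 0 < max B 0 + 1 := by positivity
  refine ⟨max B 0 + 1, hR, (isCompact_sphere _ _).exists_forall_le' (by fun_prop) fun w hw => ?_⟩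
  refine norm_pos_iff.mpr fun hroot => ?_
  have : ‖w‖ ≤ B := hB ⟨w, hroot, rfl⟩
  rw [mem_sphere_zero_iff_norm.mp hw] at this
  linarith [le_max_left B 0]

lemma Polynomial.exists_norm_apply_zero_le_of_norm_eval_mul_le {P : ℂ[X]} (hP : P ≠ 0) :
    ∃ R > 0, ∃ c > 0, ∀ (g : ℂ → ℂ) (B : ℝ), Differentiable ℂ g →
      (∀ w, ‖w‖ = R → ‖P.eval w * g w‖ ≤ B) → ‖g 0‖ ≤ c * B := by
  obtain ⟨R, hR, ε, hε, hPε⟩ := exists_sphere_forall_le_norm_eval hP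
  refine ⟨R, hR, ε⁻¹, inv_pos.mpr hε, fun g B hg hgB => ?_⟩
  refine Complex.norm_le_of_forall_mem_frontier_norm_le isBounded_ball hg.diffContOnCl
    (fun w hw => ?_) (subset_closure (mem_ball_self hR))
  rw [frontier_ball 0 hR.ne'] at hw
  rw [le_inv_mul_iff₀ hε]
  calc ε * ‖g w‖ ≤ ‖P.eval w‖ * ‖g w‖ := by gcongr; exact hPε w hw
    _ ≤ B := by rw [← norm_mul]; exact hgB w (mem_sphere_zero_iff_norm.mp hw)

theorem stmt_17_general {n : ℕ} (p p₁ q : MvPolynomial (Fin n) ℂ) (hp : p ≠ 0)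
    (hpfac : p = p₁ * q)
    (v : Fin n → ℂ) (A : ℝ) (hA : 0 < A) :
    ∃ c : ℝ, 0 < c ∧ ∀ (f : (Fin n → ℂ) → ℂ) (M : ℝ), Differentiable ℂ f →
      (∀ z, ‖MvPolynomial.eval z q * f z‖ ≤ M * Real.exp (A * enorm' z)) →
      ‖f v‖ ≤ c * Real.exp (Real.sqrt n * A * enorm' v) * M := by
  obtain ⟨z₀, hz₀⟩ := MvPolynomial.exists_eval_ne_zero (right_ne_zero_of_mul (hpfac ▸ hp))
  set u := z₀ - v
  obtain ⟨P, hP⟩ := q.exists_polynomial_eval_eq_eval_add_smul v u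
  have hP0 : P ≠ 0 := fun h => hz₀ (by simpa [u, h] using (hP 1).symm)
  obtain ⟨R, hR, c, hc, hcenter⟩ := exists_norm_apply_zero_le_of_norm_eval_mul_le hP0
  refine ⟨c * exp (A * (R * enorm' u)), by positivity, fun f M hf hfq => ?_⟩
  have hM : 0 ≤ M := nonneg_of_mul_nonneg_left ((norm_nonneg _).trans (hfq 0)) (exp_pos _)
  have hline : ∀ w : ℂ, ‖w‖ = R →
      ‖P.eval w * f (v + w • u)‖ ≤ M * exp (A * (enorm' v + R * enorm' u)) := by
    intro w hw
    rw [hP, ← hw]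
    exact (hfq _).trans (by gcongr; exact enorm'_add_smul_le v u w)
  calc ‖f v‖ = ‖f (v + (0 : ℂ) • u)‖ := by simp
    _ ≤ c * (M * exp (A * (enorm' v + R * enorm' u))) :=
      hcenter (fun w => f (v + w • u)) _ (by fun_prop) hline
    _ = c * exp (A * (R * enorm' u)) * exp (A * enorm' v) * M := by
      rw [mul_add, exp_add]; ring
    _ ≤ c * exp (A * (R * enorm' u)) * exp (√n * A * enorm' v) * M := by
      gcongr _ * exp ?_ * _
      rw [mul_assoc, mul_left_comm]
      exact mul_le_mul_of_nonneg_left (enorm'_le_sqrt_mul v) hA.le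

theorem stmt_17 {n : ℕ} (p p₁ q : MvPolynomial (Fin n) ℂ) (hp : p ≠ 0)
    (hpfac : p = p₁ * q) (hp₁ : p₁.totalDegree ≠ 0)
    (v : Fin n → ℂ) (hv : MvPolynomial.eval v p₁ = 0) (A : ℝ) (hA : 0 < A) :
    ∃ c : ℝ, 0 < c ∧ ∀ (f : (Fin n → ℂ) → ℂ) (M : ℝ), Differentiable ℂ f →
      (∀ z, ‖MvPolynomial.eval z q * f z‖ ≤ M * Real.exp (A * enorm' z)) →
      ‖f v‖ ≤ c * Real.exp (Real.sqrt n * A * enorm' v) * M :=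
  stmt_17_general p p₁ q hp hpfac v A hA
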